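/- Each σ_i (i ∈ I) is a ℂ-linear automorphism of V which commutes with the shift S_c for every c ∈ ℂ and which preserves, for every integer r ≥ 0, the subspace V_r of tuples of polynomials of degree at most r. Moreover, for every pair i ≠ j in I the braid relation of order m_{ij} holds: σ_i∘σ_j∘σ_i∘⋯ = σ_j∘σ_i∘σ_j∘⋯, with m_{ij} factors on each side. -/
import Mathlib


noncomputable section
/-- The value `m_{ij}` of the Coxeter matrix attached to `t = a_{ij}·a_{ji}`:
`2, 3, 4, 6` according as `t = 0, 1, 2, 3`. -/
def coxEntry (t : ℤ) : ℕ :=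
  if t = 0 then 2 else if t = 1 then 3 else if t = 2 then 4 else 6

/-- A generalized Cartan matrix `(a_{ij})` of finite type, with symmetrizing positive
integers `(d_i)`, together with its Coxeter matrix `(m_{ij})` whose associated Coxeter
group is required to be finite. -/
structure FiniteCartan (I : Type) where
  a : I → I → ℤ
  d : I → ℤ
  cm : CoxeterMatrix I
  a_diag : ∀ i, a i i = 2
  a_offdiag_nonpos : ∀ i j, i ≠ j → a i j ≤ 0
  d_pos : ∀ i, 0 < d i
  d_symmetrizes : ∀ i j, d i * a i j = d j * a j i
  a_bound : ∀ i j, i ≠ j → a i j * a j i ≤ 3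
  cm_offdiag : ∀ i j, i ≠ j → cm i j = coxEntry (a i j * a j i)
  finiteWeyl : Finite cm.Group

/-- `ε_{ij} = (-1)^{δ_{ij}}`. -/
def eps {I : Type} [DecidableEq I] (i j : I) : ℤ := if i = j then -1 else 1

/-- The alternating composition `f ∘ g ∘ f ∘ ⋯` with `n` factors. -/
def braidWord {α : Type*} (f g : α → α) : ℕ → (α → α)
  | 0 => id
  | n + 1 => f ∘ braidWord g f n

/-- The shift operator `S_c` on `V = (I → ℂ[t])`: `(S_c f)_j(t) = f_j(t + c)`. -/
def shiftV {I : Type} (c : ℂ) (f : I → Polynomial ℂ) : I → Polynomial ℂ := fun j =>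
  (f j).comp (Polynomial.X + Polynomial.C c)

/-- The operator `σ_i` on `V = (I → ℂ[t])`: `(σ_i f)_ℓ = f_ℓ` for `ℓ ≠ i`, and
`(σ_i f)_i = f_i + Σ_{j∈I} ε_{ij} Σ_{k=0}^{|a_{ij}|−1} (S_{(ħ d_i/2)(|a_{ij}|−2k)} f)_j`. -/
def sigmaV {I : Type} [Fintype I] [DecidableEq I] (a : I → I → ℤ) (d : I → ℤ)
    (hbar : ℂ) (i : I) (f : I → Polynomial ℂ) : I → Polynomial ℂ := fun l =>
  if l = i then
    f i + ∑ j : I, (eps i j : ℂ) •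
      ∑ k ∈ Finset.range (a i j).natAbs,
        shiftV ((hbar * (d i : ℂ) / 2) * (((a i j).natAbs : ℂ) - 2 * (k : ℂ))) f j
  else f l


noncomputable section
namespace BraidAux
open Polynomial Finset

def S (c : ℂ) (p : Polynomial ℂ) : Polynomial ℂ := Polynomial.taylor c p

@[simp] lemma S_add (c : ℂ) (p q : Polynomial ℂ) : S c (p + q) = S c p + S c q := map_add _ _ _
@[simp] lemma S_neg (c : ℂ) (p : Polynomial ℂ) : S c (-p) = -(S c p) := map_neg _ _
@[simp] lemma S_sub (c : ℂ) (p q : Polynomial ℂ) : S c (p - q) = S c p - S c q := map_sub _ _ _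
@[simp] lemma S_smul (c z : ℂ) (p : Polynomial ℂ) : S c (z • p) = z • S c p := map_smul _ _ _
@[simp] lemma S_S (c c' : ℂ) (p : Polynomial ℂ) : S c (S c' p) = S (c + c') p :=
  Polynomial.taylor_taylor p c c'
@[simp] lemma S_zero (p : Polynomial ℂ) : S 0 p = p := Polynomial.taylor_zero p
@[simp] lemma S_sum {α : Type*} (c : ℂ) (s : Finset α) (g : α → Polynomial ℂ) :
    S c (∑ x ∈ s, g x) = ∑ x ∈ s, S c (g x) := map_sum _ _ _

lemma shiftV_eq {I : Type} (c : ℂ) (f : I → Polynomial ℂ) (j : I) :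
    shiftV c f j = S c (f j) := (Polynomial.taylor_apply _ _).symm

lemma natDegree_S (c : ℂ) (p : Polynomial ℂ) : (S c p).natDegree = p.natDegree :=
  Polynomial.natDegree_taylor p c

lemma degree_S_le {c : ℂ} {p : Polynomial ℂ} {r : ℕ} (h : p.degree ≤ r) :
    (S c p).degree ≤ r := by
  by_cases hp : p = 0
  · simp [hp, S]
  · have h0 : S c p ≠ 0 := by
      intro hc
      have := natDegree_S c p
      -- use eval or injectivity instead
      apply hp
      have : taylor (-c) (taylor c p) = taylor (-c) (0 : Polynomial ℂ) := by
        rw [← hc]; rfl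
      simpa [Polynomial.taylor_taylor] using this
    rw [Polynomial.degree_eq_natDegree h0, natDegree_S, ← Polynomial.degree_eq_natDegree hp]
    exact h

end BraidAux

section Chunk2
namespace BraidAux
open Polynomial Finset

variable {I : Type} [Fintype I] [DecidableEq I] (a : I → I → ℤ) (d : I → ℤ) (hb : ℂ)

lemma sigma_ne (i l : I) (h : l ≠ i) (f : I → Polynomial ℂ) :
    sigmaV a d hb i f l = f l := if_neg h

def rest (i j : I) (f : I → Polynomial ℂ) : Polynomial ℂ :=
  ∑ l ∈ Finset.univ \ {i, j}, ∑ k ∈ Finset.range (a i l).natAbs,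
    S ((hb * (d i : ℂ) / 2) * (((a i l).natAbs : ℂ) - 2 * (k : ℂ))) (f l)

lemma rest_sigma (i j i' : I) (hi : i' = i ∨ i' = j) (f : I → Polynomial ℂ) :
    rest a d hb i j (sigmaV a d hb i' f) = rest a d hb i j f := by
  unfold rest
  refine Finset.sum_congr rfl fun l hl => ?_
  simp only [Finset.mem_sdiff, Finset.mem_insert, Finset.mem_singleton, Finset.mem_univ,
    true_and] at hl
  push_neg at hl
  have : l ≠ i' := by rcases hi with h | h <;> subst h <;> [exact hl.1; exact hl.2]
  rw [sigma_ne a d hb i' l this]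

lemma sigma_self (i j : I) (hdiag : a i i = 2) (hij : i ≠ j) (f : I → Polynomial ℂ) :
    sigmaV a d hb i f i = -(S (hb * (d i : ℂ)) (f i)) +
      (∑ k ∈ Finset.range (a i j).natAbs,
        S ((hb * (d i : ℂ) / 2) * (((a i j).natAbs : ℂ) - 2 * (k : ℂ))) (f j)) +
      rest a d hb i j f := by
  unfold sigmaV
  rw [if_pos rfl]
  have hsub : ({i, j} : Finset I) ⊆ Finset.univ := Finset.subset_univ _
  rw [← Finset.sum_sdiff hsub, Finset.sum_pair hij]
  have hrest : ∑ l ∈ Finset.univ \ {i, j}, (eps i l : ℂ) •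
      ∑ k ∈ Finset.range (a i l).natAbs,
        shiftV ((hb * (d i : ℂ) / 2) * (((a i l).natAbs : ℂ) - 2 * (k : ℂ))) f l
      = rest a d hb i j f := by
    unfold rest
    refine Finset.sum_congr rfl fun l hl => ?_
    simp only [Finset.mem_sdiff, Finset.mem_insert, Finset.mem_singleton, Finset.mem_univ,
      true_and] at hl
    push_neg at hl
    have : i ≠ l := fun h => hl.1 h.symm
    simp [eps, this, shiftV_eq]
  rw [hrest]
  have heps1 : (eps i i : ℂ) = -1 := by simp [eps]
  have heps2 : (eps i j : ℂ) = 1 := by simp [eps, hij]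
  rw [heps1, heps2, one_smul, neg_one_smul]
  have hii : (a i i).natAbs = 2 := by rw [hdiag]; rfl
  rw [hii]
  simp only [shiftV_eq, Finset.sum_range_succ, Finset.sum_range_zero, zero_add,
    Nat.cast_zero, Nat.cast_one, Nat.cast_ofNat]
  norm_num
  abel

end BraidAux
end Chunk2

section Chunk3
namespace BraidAux
open Polynomial Finset

variable {I : Type} [Fintype I] [DecidableEq I] (a : I → I → ℤ) (d : I → ℤ) (hb : ℂ)

lemma sigma_linear (i : I) : IsLinearMap ℂ (sigmaV a d hb i) := by
  constructor
  · intro f g; funext l; unfold sigmaV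
    by_cases h : l = i
    · simp only [if_pos h, shiftV_eq, Pi.add_apply, S_add, smul_add, Finset.sum_add_distrib]
      abel
    · simp [if_neg h]
  · intro z f; funext l; unfold sigmaV
    by_cases h : l = i
    · simp only [if_pos h, shiftV_eq, Pi.smul_apply, S_smul, Finset.smul_sum, smul_add,
        smul_comm _ z]
    · simp [if_neg h]

def Tfull (i : I) (f : I → Polynomial ℂ) : Polynomial ℂ :=
  ∑ l ∈ Finset.univ \ {i}, ∑ k ∈ Finset.range (a i l).natAbs,
    S ((hb * (d i : ℂ) / 2) * (((a i l).natAbs : ℂ) - 2 * (k : ℂ))) (f l)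

lemma Tfull_congr (i : I) (f g : I → Polynomial ℂ) (h : ∀ l, l ≠ i → f l = g l) :
    Tfull a d hb i f = Tfull a d hb i g := by
  unfold Tfull
  refine Finset.sum_congr rfl fun l hl => ?_
  simp only [Finset.mem_sdiff, Finset.mem_singleton, Finset.mem_univ, true_and] at hl
  rw [h l hl]

lemma sigma_self_one (i : I) (hdiag : a i i = 2) (f : I → Polynomial ℂ) :
    sigmaV a d hb i f i = -(S (hb * (d i : ℂ)) (f i)) + Tfull a d hb i f := by
  unfold sigmaV
  rw [if_pos rfl]
  have hsub : ({i} : Finset I) ⊆ Finset.univ := Finset.subset_univ _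
  rw [← Finset.sum_sdiff hsub, Finset.sum_singleton]
  have hrest : ∑ l ∈ Finset.univ \ {i}, (eps i l : ℂ) •
      ∑ k ∈ Finset.range (a i l).natAbs,
        shiftV ((hb * (d i : ℂ) / 2) * (((a i l).natAbs : ℂ) - 2 * (k : ℂ))) f l
      = Tfull a d hb i f := by
    unfold Tfull
    refine Finset.sum_congr rfl fun l hl => ?_
    simp only [Finset.mem_sdiff, Finset.mem_singleton, Finset.mem_univ, true_and] at hl
    have : i ≠ l := fun h => hl h.symm
    simp [eps, this, shiftV_eq]
  rw [hrest]
  have heps1 : (eps i i : ℂ) = -1 := by simp [eps]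
  rw [heps1, neg_one_smul]
  have hii : (a i i).natAbs = 2 := by rw [hdiag]; rfl
  rw [hii]
  simp only [shiftV_eq, Finset.sum_range_succ, Finset.sum_range_zero, zero_add,
    Nat.cast_zero, Nat.cast_one, Nat.cast_ofNat]
  norm_num
  abel

def invSigma (i : I) (g : I → Polynomial ℂ) : I → Polynomial ℂ := fun l =>
  if l = i then S (-(hb * (d i : ℂ))) (Tfull a d hb i g - g i) else g l

lemma sigma_bijective (i : I) (hdiag : a i i = 2) :
    Function.Bijective (sigmaV a d hb i) := by
  have hL : Function.LeftInverse (invSigma a d hb i) (sigmaV a d hb i) := by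
    intro f; funext l; unfold invSigma
    by_cases h : l = i
    · subst h
      rw [if_pos rfl, Tfull_congr a d hb l (sigmaV a d hb l f) f
          (fun l' hl' => sigma_ne a d hb l l' hl' f),
        sigma_self_one a d hb l hdiag]
      simp
    · rw [if_neg h]; exact sigma_ne a d hb i l h f
  have hR : Function.RightInverse (invSigma a d hb i) (sigmaV a d hb i) := by
    intro g; funext l
    by_cases h : l = i
    · subst h
      rw [sigma_self_one a d hb l hdiag,
        Tfull_congr a d hb l (invSigma a d hb l g) g
          (fun l' hl' => by unfold invSigma; rw [if_neg hl'])]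
      unfold invSigma
      rw [if_pos rfl]
      simp
    · rw [sigma_ne a d hb i l h]; unfold invSigma; rw [if_neg h]
  exact ⟨hL.injective, hR.surjective⟩

lemma sigma_shift_comm (i : I) (c : ℂ) :
    sigmaV a d hb i ∘ shiftV c = shiftV c ∘ sigmaV a d hb i := by
  funext f l
  show sigmaV a d hb i (shiftV c f) l = shiftV c (sigmaV a d hb i f) l
  by_cases h : l = i
  · subst h
    rw [shiftV_eq c (sigmaV a d hb l f) l]
    unfold sigmaV
    rw [if_pos rfl, if_pos rfl]
    simp only [shiftV_eq, S_add, S_smul, S_sum, S_S]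
    refine congrArg _ ?_
    refine Finset.sum_congr rfl fun j _ => ?_
    refine congrArg _ ?_
    refine Finset.sum_congr rfl fun k _ => ?_
    rw [add_comm]
  · rw [sigma_ne a d hb i l h]
    show _ = S c (sigmaV a d hb i f l)
    rw [sigma_ne a d hb i l h, shiftV_eq]

lemma sigma_degree (i : I) (r : ℕ) (f : I → Polynomial ℂ)
    (hf : ∀ j, (f j).degree ≤ r) (l : I) :
    ((sigmaV a d hb i f) l).degree ≤ r := by
  by_cases h : l = i
  · subst h
    unfold sigmaV
    rw [if_pos rfl]
    refine le_trans (Polynomial.degree_add_le _ _) (max_le (hf l) ?_)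
    refine le_trans (Polynomial.degree_sum_le _ _) (Finset.sup_le fun j _ => ?_)
    refine le_trans (Polynomial.degree_smul_le _ _) ?_
    refine le_trans (Polynomial.degree_sum_le _ _) (Finset.sup_le fun k _ => ?_)
    rw [shiftV_eq]
    exact degree_S_le (hf j)
  · rw [sigma_ne a d hb i l h]; exact hf l

end BraidAux
end Chunk3

section Chunk4
namespace BraidAux
open Polynomial Finset

variable {I : Type}

lemma braid2 (i j : I) (hij : i ≠ j)
    (σ τ : (I → Polynomial ℂ) → (I → Polynomial ℂ)) (c₁ c₂ : ℂ)
    (Ri Rj : (I → Polynomial ℂ) → Polynomial ℂ)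
    (hσi : ∀ g, σ g i = -(S c₁ (g i)) + Ri g)
    (hσne : ∀ g l, l ≠ i → σ g l = g l)
    (hτj : ∀ g, τ g j = -(S c₂ (g j)) + Rj g)
    (hτne : ∀ g l, l ≠ j → τ g l = g l)
    (hRiσ : ∀ g, Ri (σ g) = Ri g) (hRiτ : ∀ g, Ri (τ g) = Ri g)
    (hRjσ : ∀ g, Rj (σ g) = Rj g) (hRjτ : ∀ g, Rj (τ g) = Rj g) :
    braidWord σ τ 2 = braidWord τ σ 2 := by
  have hτi : ∀ g, τ g i = g i := fun g => hτne g i hij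
  have hσj : ∀ g, σ g j = g j := fun g => hσne g j hij.symm
  funext f l
  show σ (τ (id f)) l = τ (σ (id f)) l
  by_cases h1 : l = i
  · subst h1; simp only [id, hσi, hτi, hRiτ]
  by_cases h2 : l = j
  · subst h2; simp only [id, hτj, hσj, hRjσ]
  · simp only [id, hσne _ _ h1, hτne _ _ h2]

lemma braid3 (i j : I) (hij : i ≠ j)
    (σ τ : (I → Polynomial ℂ) → (I → Polynomial ℂ)) (c : ℂ)
    (Ri Rj : (I → Polynomial ℂ) → Polynomial ℂ)
    (hσi : ∀ g, σ g i = -(S (2*c) (g i)) + S c (g j) + Ri g)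
    (hσne : ∀ g l, l ≠ i → σ g l = g l)
    (hτj : ∀ g, τ g j = -(S (2*c) (g j)) + S c (g i) + Rj g)
    (hτne : ∀ g l, l ≠ j → τ g l = g l)
    (hRiσ : ∀ g, Ri (σ g) = Ri g) (hRiτ : ∀ g, Ri (τ g) = Ri g)
    (hRjσ : ∀ g, Rj (σ g) = Rj g) (hRjτ : ∀ g, Rj (τ g) = Rj g) :
    braidWord σ τ 3 = braidWord τ σ 3 := by
  have hτi : ∀ g, τ g i = g i := fun g => hτne g i hij
  have hσj : ∀ g, σ g j = g j := fun g => hσne g j hij.symm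
  funext f l
  show σ (τ (σ (id f))) l = τ (σ (τ (id f))) l
  by_cases h1 : l = i
  · subst h1
    simp only [id, hσi, hτj, hτi, hσj, hRiσ, hRiτ, hRjσ, hRjτ]
    simp only [S_add, S_neg, S_S, neg_neg, neg_add]
    ring_nf
    try simp only [S_zero]
    try ring_nf
    try abel
  by_cases h2 : l = j
  · subst h2
    simp only [id, hσi, hτj, hτi, hσj, hRiσ, hRiτ, hRjσ, hRjτ]
    simp only [S_add, S_neg, S_S, neg_neg, neg_add]
    ring_nf
    try simp only [S_zero]
    try ring_nf
    try abel
  · simp only [id, hσne _ _ h1, hτne _ _ h2]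

end BraidAux
end Chunk4

section Chunk5
namespace BraidAux
open Polynomial Finset

variable {I : Type}

lemma braid4 (i j : I) (hij : i ≠ j)
    (σ τ : (I → Polynomial ℂ) → (I → Polynomial ℂ)) (c : ℂ)
    (Ri Rj : (I → Polynomial ℂ) → Polynomial ℂ)
    (hσi : ∀ g, σ g i = -(S (2*c) (g i)) + S c (g j) + Ri g)
    (hσne : ∀ g l, l ≠ i → σ g l = g l)
    (hτj : ∀ g, τ g j = -(S c (g j)) + (S c (g i) + g i) + Rj g)
    (hτne : ∀ g l, l ≠ j → τ g l = g l)
    (hRiσ : ∀ g, Ri (σ g) = Ri g) (hRiτ : ∀ g, Ri (τ g) = Ri g)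
    (hRjσ : ∀ g, Rj (σ g) = Rj g) (hRjτ : ∀ g, Rj (τ g) = Rj g) :
    braidWord σ τ 4 = braidWord τ σ 4 := by
  have hτi : ∀ g, τ g i = g i := fun g => hτne g i hij
  have hσj : ∀ g, σ g j = g j := fun g => hσne g j hij.symm
  funext f l
  show σ (τ (σ (τ (id f)))) l = τ (σ (τ (σ (id f)))) l
  by_cases h1 : l = i
  · subst h1
    simp only [id, hσi, hτj, hτi, hσj, hRiσ, hRiτ, hRjσ, hRjτ]
    simp only [S_add, S_neg, S_S, neg_neg, neg_add]
    ring_nf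
    try simp only [S_zero]
    try ring_nf
    try abel
  by_cases h2 : l = j
  · subst h2
    simp only [id, hσi, hτj, hτi, hσj, hRiσ, hRiτ, hRjσ, hRjτ]
    simp only [S_add, S_neg, S_S, neg_neg, neg_add]
    ring_nf
    try simp only [S_zero]
    try ring_nf
    try abel
  · simp only [id, hσne _ _ h1, hτne _ _ h2]

lemma braid6 (i j : I) (hij : i ≠ j)
    (σ τ : (I → Polynomial ℂ) → (I → Polynomial ℂ)) (c : ℂ)
    (Ri Rj : (I → Polynomial ℂ) → Polynomial ℂ)
    (hσi : ∀ g, σ g i = -(S (6*c) (g i)) + S (3*c) (g j) + Ri g)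
    (hσne : ∀ g l, l ≠ i → σ g l = g l)
    (hτj : ∀ g, τ g j = -(S (2*c) (g j)) + (S (3*c) (g i) + (S c (g i) + S (-c) (g i))) + Rj g)
    (hτne : ∀ g l, l ≠ j → τ g l = g l)
    (hRiσ : ∀ g, Ri (σ g) = Ri g) (hRiτ : ∀ g, Ri (τ g) = Ri g)
    (hRjσ : ∀ g, Rj (σ g) = Rj g) (hRjτ : ∀ g, Rj (τ g) = Rj g) :
    braidWord σ τ 6 = braidWord τ σ 6 := by
  have hτi : ∀ g, τ g i = g i := fun g => hτne g i hij
  have hσj : ∀ g, σ g j = g j := fun g => hσne g j hij.symm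
  funext f l
  show σ (τ (σ (τ (σ (τ (id f)))))) l = τ (σ (τ (σ (τ (σ (id f)))))) l
  by_cases h1 : l = i
  · subst h1
    simp only [id, hσi, hτj, hτi, hσj, hRiσ, hRiτ, hRjσ, hRjτ]
    simp only [S_add, S_neg, S_S, neg_neg, neg_add]
    ring_nf
    try simp only [S_zero]
    try ring_nf
    try abel
  by_cases h2 : l = j
  · subst h2
    simp only [id, hσi, hτj, hτi, hσj, hRiσ, hRiτ, hRjσ, hRjτ]
    simp only [S_add, S_neg, S_S, neg_neg, neg_add]
    ring_nf
    try simp only [S_zero]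
    try ring_nf
    try abel
  · simp only [id, hσne _ _ h1, hτne _ _ h2]

end BraidAux
end Chunk5

section Chunk6
namespace BraidAux
open Polynomial Finset

variable {I : Type} [Fintype I] [DecidableEq I] (a : I → I → ℤ) (d : I → ℤ) (hb : ℂ)

lemma sigma_self_p0 (i j : I) (hdiag : a i i = 2) (hij : i ≠ j)
    (hp : (a i j).natAbs = 0) (g : I → Polynomial ℂ) :
    sigmaV a d hb i g i = -(S (hb * (d i : ℂ)) (g i)) + rest a d hb i j g := by
  rw [sigma_self a d hb i j hdiag hij g, hp]
  simp

lemma sigma_self_p1 (i j : I) (hdiag : a i i = 2) (hij : i ≠ j)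
    (hp : (a i j).natAbs = 1) (g : I → Polynomial ℂ) :
    sigmaV a d hb i g i = -(S (hb * (d i : ℂ)) (g i)) +
      S (hb * (d i : ℂ) / 2) (g j) + rest a d hb i j g := by
  rw [sigma_self a d hb i j hdiag hij g, hp]
  norm_num

lemma sigma_self_p2 (i j : I) (hdiag : a i i = 2) (hij : i ≠ j)
    (hp : (a i j).natAbs = 2) (g : I → Polynomial ℂ) :
    sigmaV a d hb i g i = -(S (hb * (d i : ℂ)) (g i)) +
      (S (hb * (d i : ℂ)) (g j) + g j) + rest a d hb i j g := by
  rw [sigma_self a d hb i j hdiag hij g, hp]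
  simp only [Finset.sum_range_succ, Finset.sum_range_zero, zero_add, Nat.cast_zero,
    Nat.cast_one, Nat.cast_ofNat]
  norm_num

lemma sigma_self_p3 (i j : I) (hdiag : a i i = 2) (hij : i ≠ j)
    (hp : (a i j).natAbs = 3) (g : I → Polynomial ℂ) :
    sigmaV a d hb i g i = -(S (hb * (d i : ℂ)) (g i)) +
      (S (hb * (d i : ℂ) / 2 * 3) (g j) + (S (hb * (d i : ℂ) / 2) (g j) +
        S (-(hb * (d i : ℂ) / 2)) (g j))) + rest a d hb i j g := by
  rw [sigma_self a d hb i j hdiag hij g, hp]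
  simp only [Finset.sum_range_succ, Finset.sum_range_zero, zero_add, Nat.cast_zero,
    Nat.cast_one, Nat.cast_ofNat]
  ring_nf
  try abel

end BraidAux
end Chunk6

section Chunk7
namespace BraidAux
open Polynomial Finset

variable {I : Type} [Fintype I] [DecidableEq I]

lemma braid_main (𝒞 : FiniteCartan I) (hb : ℂ) (i j : I) (hij : i ≠ j) :
    braidWord (sigmaV 𝒞.a 𝒞.d hb i) (sigmaV 𝒞.a 𝒞.d hb j) (𝒞.cm i j) =
      braidWord (sigmaV 𝒞.a 𝒞.d hb j) (sigmaV 𝒞.a 𝒞.d hb i) (𝒞.cm i j) := by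
  have key : ∀ i j : I, i ≠ j → ∀ p q m : ℕ,
      (𝒞.a i j).natAbs = p → (𝒞.a j i).natAbs = q →
      ((p = 1 ∧ q = 1 ∧ m = 3) ∨ (p = 1 ∧ q = 2 ∧ m = 4) ∨ (p = 1 ∧ q = 3 ∧ m = 6)) →
      braidWord (sigmaV 𝒞.a 𝒞.d hb i) (sigmaV 𝒞.a 𝒞.d hb j) m =
        braidWord (sigmaV 𝒞.a 𝒞.d hb j) (sigmaV 𝒞.a 𝒞.d hb i) m := by
    intro i j hij p q m hp hq hcase
    have hdij : (𝒞.d i : ℤ) * p = (𝒞.d j : ℤ) * q := by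
      have h1 := 𝒞.d_symmetrizes i j
      have hap : 𝒞.a i j = -(p : ℤ) := by
        have := Int.natAbs_eq (𝒞.a i j)
        have h2 := 𝒞.a_offdiag_nonpos i j hij
        omega
      have haq : 𝒞.a j i = -(q : ℤ) := by
        have := Int.natAbs_eq (𝒞.a j i)
        have h2 := 𝒞.a_offdiag_nonpos j i hij.symm
        omega
      rw [hap, haq] at h1
      linarith
    have hσne : ∀ g l, l ≠ i → sigmaV 𝒞.a 𝒞.d hb i g l = g l :=
      fun g l h => sigma_ne 𝒞.a 𝒞.d hb i l h g
    have hτne : ∀ g l, l ≠ j → sigmaV 𝒞.a 𝒞.d hb j g l = g l :=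
      fun g l h => sigma_ne 𝒞.a 𝒞.d hb j l h g
    have hRii := fun g => rest_sigma 𝒞.a 𝒞.d hb i j i (Or.inl rfl) g
    have hRij := fun g => rest_sigma 𝒞.a 𝒞.d hb i j j (Or.inr rfl) g
    have hRji := fun g => rest_sigma 𝒞.a 𝒞.d hb j i i (Or.inr rfl) g
    have hRjj := fun g => rest_sigma 𝒞.a 𝒞.d hb j i j (Or.inl rfl) g
    rcases hcase with ⟨hp1, hq1, hm1⟩ | ⟨hp1, hq1, hm1⟩ | ⟨hp1, hq1, hm1⟩ <;>
      subst hp1 <;> subst hq1 <;> subst hm1 <;> push_cast at hdij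
    · -- p = q = 1, m = 3
      have hdc : ((𝒞.d i : ℤ) : ℂ) = ((𝒞.d j : ℤ) : ℂ) := by
        have : (𝒞.d i : ℤ) = 𝒞.d j := by linarith
        exact_mod_cast this
      refine braid3 i j hij _ _ (hb * (𝒞.d i : ℂ) / 2) (rest 𝒞.a 𝒞.d hb i j)
        (rest 𝒞.a 𝒞.d hb j i) ?_ hσne ?_ hτne hRii hRij hRji hRjj
      · intro g
        rw [sigma_self_p1 𝒞.a 𝒞.d hb i j (𝒞.a_diag i) hij hp g]
        ring_nf
      · intro g
        rw [sigma_self_p1 𝒞.a 𝒞.d hb j i (𝒞.a_diag j) hij.symm hq g, hdc]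
        ring_nf
    · -- p = 1, q = 2, m = 4
      have hdc : ((𝒞.d i : ℤ) : ℂ) = 2 * ((𝒞.d j : ℤ) : ℂ) := by
        have : (𝒞.d i : ℤ) = 2 * 𝒞.d j := by linarith
        exact_mod_cast this
      refine braid4 i j hij _ _ (hb * (𝒞.d j : ℂ)) (rest 𝒞.a 𝒞.d hb i j)
        (rest 𝒞.a 𝒞.d hb j i) ?_ hσne ?_ hτne hRii hRij hRji hRjj
      · intro g
        rw [sigma_self_p1 𝒞.a 𝒞.d hb i j (𝒞.a_diag i) hij hp g, hdc]
        ring_nf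
      · intro g
        rw [sigma_self_p2 𝒞.a 𝒞.d hb j i (𝒞.a_diag j) hij.symm hq g]
    · -- p = 1, q = 3, m = 6
      have hdc : ((𝒞.d i : ℤ) : ℂ) = 3 * ((𝒞.d j : ℤ) : ℂ) := by
        have : (𝒞.d i : ℤ) = 3 * 𝒞.d j := by linarith
        exact_mod_cast this
      refine braid6 i j hij _ _ (hb * (𝒞.d j : ℂ) / 2) (rest 𝒞.a 𝒞.d hb i j)
        (rest 𝒞.a 𝒞.d hb j i) ?_ hσne ?_ hτne hRii hRij hRji hRjj
      · intro g
        rw [sigma_self_p1 𝒞.a 𝒞.d hb i j (𝒞.a_diag i) hij hp g, hdc]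
        ring_nf
      · intro g
        rw [sigma_self_p3 𝒞.a 𝒞.d hb j i (𝒞.a_diag j) hij.symm hq g]
        ring_nf
  -- case analysis
  set p := (𝒞.a i j).natAbs with hpdef
  set q := (𝒞.a j i).natAbs with hqdef
  have hap : 𝒞.a i j = -(p : ℤ) := by
    have := Int.natAbs_eq (𝒞.a i j)
    have h2 := 𝒞.a_offdiag_nonpos i j hij
    omega
  have haq : 𝒞.a j i = -(q : ℤ) := by
    have := Int.natAbs_eq (𝒞.a j i)
    have h2 := 𝒞.a_offdiag_nonpos j i hij.symm
    omega
  have hm : 𝒞.cm i j = coxEntry ((p : ℤ) * q) := by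
    rw [𝒞.cm_offdiag i j hij, hap, haq]
    congr 1
    ring
  have hdij : (𝒞.d i : ℤ) * p = (𝒞.d j : ℤ) * q := by
    have h1 := 𝒞.d_symmetrizes i j
    rw [hap, haq] at h1
    linarith
  have hbound : p * q ≤ 3 := by
    have h := 𝒞.a_bound i j hij
    rw [hap, haq] at h
    have : ((p * q : ℕ) : ℤ) ≤ 3 := by push_cast; nlinarith
    exact_mod_cast this
  have hdi := 𝒞.d_pos i
  have hdj := 𝒞.d_pos j
  by_cases hp0 : p = 0
  · -- then q = 0, m = 2
    have hq0 : q = 0 := by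
      have h0 : (𝒞.d j) * (q : ℤ) = 0 := by
        rw [← hdij, hp0]; simp
      rcases mul_eq_zero.mp h0 with h | h
      · omega
      · exact_mod_cast h
    have hm' : 𝒞.cm i j = 2 := by
      rw [hm, hp0, hq0]; norm_num [coxEntry]
    rw [hm']
    exact braid2 i j hij _ _ (hb * (𝒞.d i : ℂ)) (hb * (𝒞.d j : ℂ))
      (rest 𝒞.a 𝒞.d hb i j) (rest 𝒞.a 𝒞.d hb j i)
      (fun g => sigma_self_p0 𝒞.a 𝒞.d hb i j (𝒞.a_diag i) hij (by omega) g)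
      (fun g l h => sigma_ne 𝒞.a 𝒞.d hb i l h g)
      (fun g => sigma_self_p0 𝒞.a 𝒞.d hb j i (𝒞.a_diag j) hij.symm (by omega) g)
      (fun g l h => sigma_ne 𝒞.a 𝒞.d hb j l h g)
      (fun g => rest_sigma 𝒞.a 𝒞.d hb i j i (Or.inl rfl) g)
      (fun g => rest_sigma 𝒞.a 𝒞.d hb i j j (Or.inr rfl) g)
      (fun g => rest_sigma 𝒞.a 𝒞.d hb j i i (Or.inr rfl) g)
      (fun g => rest_sigma 𝒞.a 𝒞.d hb j i j (Or.inl rfl) g)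
  · have hq0 : q ≠ 0 := by
      intro h
      have h0 : (𝒞.d i) * (p : ℤ) = 0 := by rw [hdij, h]; simp
      rcases mul_eq_zero.mp h0 with h' | h'
      · omega
      · have : p = 0 := by exact_mod_cast h'
        exact hp0 this
    have hp3 : p ≤ 3 := by nlinarith [Nat.pos_of_ne_zero hq0]
    have hq3 : q ≤ 3 := by nlinarith [Nat.pos_of_ne_zero hp0]
    have hcases : (p = 1 ∧ q = 1) ∨ (p = 1 ∧ q = 2) ∨ (p = 2 ∧ q = 1) ∨
        (p = 1 ∧ q = 3) ∨ (p = 3 ∧ q = 1) := by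
      clear hm hdij hap haq hpdef hqdef
      interval_cases p <;> interval_cases q <;> omega
    rcases hcases with ⟨h1, h2⟩ | ⟨h1, h2⟩ | ⟨h1, h2⟩ | ⟨h1, h2⟩ | ⟨h1, h2⟩
    · have hm' : 𝒞.cm i j = 3 := by rw [hm, h1, h2]; norm_num [coxEntry]
      rw [hm']
      exact key i j hij 1 1 3 (by omega) (by omega) (Or.inl ⟨rfl, rfl, rfl⟩)
    · have hm' : 𝒞.cm i j = 4 := by rw [hm, h1, h2]; norm_num [coxEntry]
      rw [hm']
      exact key i j hij 1 2 4 (by omega) (by omega) (Or.inr (Or.inl ⟨rfl, rfl, rfl⟩))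
    · have hm' : 𝒞.cm i j = 4 := by rw [hm, h1, h2]; norm_num [coxEntry]
      rw [hm']
      exact (key j i hij.symm 1 2 4 (by omega) (by omega)
        (Or.inr (Or.inl ⟨rfl, rfl, rfl⟩))).symm
    · have hm' : 𝒞.cm i j = 6 := by rw [hm, h1, h2]; norm_num [coxEntry]
      rw [hm']
      exact key i j hij 1 3 6 (by omega) (by omega) (Or.inr (Or.inr ⟨rfl, rfl, rfl⟩))
    · have hm' : 𝒞.cm i j = 6 := by rw [hm, h1, h2]; norm_num [coxEntry]
      rw [hm']
      exact (key j i hij.symm 1 3 6 (by omega) (by omega)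
        (Or.inr (Or.inr ⟨rfl, rfl, rfl⟩))).symm

end BraidAux
end Chunk7

/-- each `σ_i` is a `ℂ`-linear automorphism of `V` commuting with every
shift `S_c` and preserving each subspace `V_r` of tuples of polynomials of degree at
most `r`; moreover the braid relations of order `m_{ij}` hold. -/
theorem sigmaV_properties_and_braid
    {I : Type} [Fintype I] [DecidableEq I] (𝒞 : FiniteCartan I) (hbar : ℂ)
    (hhbar : hbar ≠ 0) :
    (∀ i : I,
      IsLinearMap ℂ (sigmaV 𝒞.a 𝒞.d hbar i) ∧
      Function.Bijective (sigmaV 𝒞.a 𝒞.d hbar i) ∧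
      (∀ c : ℂ, sigmaV 𝒞.a 𝒞.d hbar i ∘ shiftV c = shiftV c ∘ sigmaV 𝒞.a 𝒞.d hbar i) ∧
      (∀ r : ℕ, ∀ f : I → Polynomial ℂ, (∀ j, (f j).degree ≤ r) →
        ∀ j, ((sigmaV 𝒞.a 𝒞.d hbar i f) j).degree ≤ r)) ∧
    (∀ i j : I, i ≠ j →
      braidWord (sigmaV 𝒞.a 𝒞.d hbar i) (sigmaV 𝒞.a 𝒞.d hbar j) (𝒞.cm i j) =
        braidWord (sigmaV 𝒞.a 𝒞.d hbar j) (sigmaV 𝒞.a 𝒞.d hbar i) (𝒞.cm i j)) := by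
  exact ⟨fun i => ⟨BraidAux.sigma_linear 𝒞.a 𝒞.d hbar i,
    BraidAux.sigma_bijective 𝒞.a 𝒞.d hbar i (𝒞.a_diag i),
    fun c => BraidAux.sigma_shift_comm 𝒞.a 𝒞.d hbar i c,
    fun r f hf j => BraidAux.sigma_degree 𝒞.a 𝒞.d hbar i r f hf j⟩,
    fun i j hij => BraidAux.braid_main 𝒞 hbar i j hij⟩
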